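/- Let s ∈ ℝ with s > 2 and define B(s;x) = Re F*(s;x), where F*(s;x) = 2·Γ(s+1)/(2π)^s · e^{−iπs/2} · ∑_{k=1}^∞ e^{2πikx}/k^s. Then for every x ∈ ℝ, the function y ↦ B(s;y) has derivative s·B(s−1;x) at x; that is, ∂ₓB(s;x) = s·B(s−1;x). (This is the B-side umbral ladder.) -/

import Mathlib

open Real Complex

/-- The polylogarithm on the unit circle: `Li_s(e^{2πix}) = ∑_{k=1}^∞ e^{2πikx}/k^s`. -/
noncomputable def liCircle (s : ℂ) (x : ℝ) : ℂ :=
  ∑' k : ℕ+, Complex.exp (2 * Real.pi * Complex.I * k * x) / (k : ℂ) ^ s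

/-- The master function `F*(s;x) = 2·Γ(s+1)/(2π)^s · e^{−iπs/2} · Li_s(e^{2πix})`. -/
noncomputable def Fstar (s : ℂ) (x : ℝ) : ℂ :=
  2 * Complex.Gamma (s + 1) / (2 * Real.pi : ℂ) ^ s *
    Complex.exp (-Real.pi * Complex.I * s / 2) * liCircle s x

/-- The analytic Bernoulli function `B(s;x) = Re F*(s;x)` for real `s`. -/
noncomputable def analyticB (s : ℝ) (x : ℝ) : ℝ := (Fstar s x).re

/-!
Differentiating `Li_s(e^{2πix})` term by term multiplies the `k`-th term by `2πik`, which turns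
`Li_s` into `2πi · Li_{s-1}`; for `Re s > 2` the differentiated series is dominated by
`2π ∑ k^{1 - Re s}`, so this is legitimate. The prefactor of `F*` absorbs the factor `2πi` via
`Γ(s+1) = s Γ(s)`, `(2π)^s = 2π (2π)^{s-1}` and `e^{-iπs/2} = -i e^{-iπ(s-1)/2}`, giving
`∂ₓ F*(s;x) = s F*(s-1;x)`. Since `s` is real, taking real parts gives the claim.
-/

noncomputable def FstarPrefactor (s : ℂ) : ℂ :=
  2 * Gamma (s + 1) / (2 * π : ℂ) ^ s * exp (-π * I * s / 2)

lemma Fstar_eq_prefactor_mul (s : ℂ) (x : ℝ) : Fstar s x = FstarPrefactor s * liCircle s x :=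
  rfl

lemma summable_one_div_pnat_rpow {p : ℝ} (hp : 1 < p) :
    Summable fun k : ℕ+ => 1 / (k : ℝ) ^ p :=
  summable_pnat_iff_summable_nat.mpr (Real.summable_one_div_nat_rpow.mpr hp)

lemma norm_liCircle_term (s : ℂ) (k : ℕ+) (x : ℝ) :
    ‖exp (2 * π * I * k * x) / (k : ℂ) ^ s‖ = 1 / (k : ℝ) ^ s.re := by
  have harg : 2 * π * I * k * x = ((2 * π * k * x : ℝ) : ℂ) * I := by push_cast; ring
  rw [norm_div, harg, norm_exp_ofReal_mul_I, norm_natCast_cpow_of_pos k.pos]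

lemma hasDerivAt_liCircle_term (s : ℂ) (k : ℕ+) (x : ℝ) :
    HasDerivAt (fun y : ℝ => exp (2 * π * I * k * y) / (k : ℂ) ^ s)
      (2 * π * I * (exp (2 * π * I * k * x) / (k : ℂ) ^ (s - 1))) x := by
  have hk : (k : ℂ) ≠ 0 := by exact_mod_cast k.ne_zero
  have hexp : HasDerivAt (fun y : ℝ => exp (2 * π * I * k * y))
      (2 * π * I * k * exp (2 * π * I * k * x)) x := by
    simpa [mul_comm] using ((hasDerivAt_id (x : ℂ)).const_mul (2 * π * I * k)).cexp.comp_ofReal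
  refine (hexp.div_const ((k : ℂ) ^ s)).congr_deriv ?_
  rw [cpow_sub _ _ hk, cpow_one]
  field_simp

lemma hasDerivAt_liCircle {s : ℂ} (hs : 2 < s.re) (x : ℝ) :
    HasDerivAt (liCircle s) (2 * π * I * liCircle (s - 1) x) x := by
  have hbound : ∀ (k : ℕ+) (y : ℝ),
      ‖2 * π * I * (exp (2 * π * I * k * y) / (k : ℂ) ^ (s - 1))‖
        ≤ 2 * π * (1 / (k : ℝ) ^ (s.re - 1)) := by
    intro k y
    rw [norm_mul, norm_liCircle_term]
    simp [abs_of_pos pi_pos]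
  have hsummable : Summable fun k : ℕ+ => exp (2 * π * I * k * x) / (k : ℂ) ^ s :=
    .of_norm <| by simpa only [norm_liCircle_term] using summable_one_div_pnat_rpow (by linarith)
  have h := hasDerivAt_tsum ((summable_one_div_pnat_rpow (by linarith)).mul_left (2 * π))
    (hasDerivAt_liCircle_term s) hbound hsummable x
  rwa [tsum_mul_left] at h

lemma FstarPrefactor_mul_two_pi_I {s : ℂ} (hs : s ≠ 0) :
    FstarPrefactor s * (2 * π * I) = s * FstarPrefactor (s - 1) := by
  have h2pi : (2 * π : ℂ) ≠ 0 := by exact_mod_cast two_pi_pos.ne'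
  have hexp : exp (-π * I * (s - 1) / 2) = exp (-π * I * s / 2) * I := by
    rw [show -π * I * (s - 1) / 2 = -π * I * s / 2 + π / 2 * I by ring, Complex.exp_add,
      exp_pi_div_two_mul_I]
  unfold FstarPrefactor
  rw [sub_add_cancel, Gamma_add_one s hs, cpow_sub _ _ h2pi, cpow_one, hexp]
  have : (2 * π : ℂ) ^ s ≠ 0 := cpow_ne_zero_iff.mpr (Or.inl h2pi)
  field_simp

lemma hasDerivAt_Fstar {s : ℂ} (hs : 2 < s.re) (x : ℝ) :
    HasDerivAt (Fstar s) (s * Fstar (s - 1) x) x := by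
  have hs0 : s ≠ 0 := by rintro rfl; norm_num at hs
  have h := (hasDerivAt_liCircle hs x).const_mul (FstarPrefactor s)
  rwa [← mul_assoc, FstarPrefactor_mul_two_pi_I hs0, mul_assoc, ← Fstar_eq_prefactor_mul] at h

/-- B-side umbral ladder: for real `s > 2`, `∂ₓ B(s;x) = s · B(s−1;x)`. -/
theorem analyticB_hasDerivAt (s : ℝ) (hs : 2 < s) (x : ℝ) :
    HasDerivAt (fun y : ℝ => analyticB s y) (s * analyticB (s - 1) x) x := by
  have h := reCLM.hasFDerivAt.comp_hasDerivAt x (hasDerivAt_Fstar (s := s) (by simpa) x)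
  simpa [analyticB, Function.comp_def] using h
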